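/- Let (σₙ,τ₀ₙ,τ₁ₙ)_{n≥0} be an arbitrary sequence of triples of permutations in S₃ and let i : ℕ → {0,1} be any sequence. Suppose there is a constant C > 0 such that for every n ≥ 0 and every pair j, j' ∈ {1,2,3} one has x_{n,j} ≤ C·x_{n,j'}. Then the intersection Δ(i₀,i₁,…) = ⋂_{n≥0} Δ(i₀,…,iₙ) is a singleton. -/

import Mathlib

open Matrix

noncomputable section

/-- `A₀ = ![![0,0,1],![1,0,0],![0,1,1]]`. -/
def A0 : Matrix (Fin 3) (Fin 3) ℝ := !![0,0,1; 1,0,0; 0,1,1]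
/-- `A₁ = ![![1,0,1],![0,1,0],![0,0,1]]`. -/
def A1 : Matrix (Fin 3) (Fin 3) ℝ := !![1,0,1; 0,1,0; 0,0,1]
/-- `B = ![![1,1,1],![0,1,1],![0,0,1]]`. -/
def Bm : Matrix (Fin 3) (Fin 3) ℝ := !![1,1,1; 0,1,1; 0,0,1]

/-- The permutation matrix of `ρ`: entry `(i,j)` is `1` iff `ρ i = j`.  In particular
`P (finRotate 3)`, the matrix of the cycle `(1 2 3)`, is `![![0,1,0],![0,0,1],![1,0,0]]`. -/
def P (ρ : Equiv.Perm (Fin 3)) : Matrix (Fin 3) (Fin 3) ℝ := ρ.permMatrix ℝ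

/-- The pair of TRIP matrices `F₀ = P_σ·A₀·P_{τ₀}`, `F₁ = P_σ·A₁·P_{τ₁}` of a triple
of permutations, as a function `Fin 2 → Matrix`. -/
def Fmat (σ τ0 τ1 : Equiv.Perm (Fin 3)) : Fin 2 → Matrix (Fin 3) (Fin 3) ℝ :=
  ![P σ * A0 * P τ0, P σ * A1 * P τ1]

/-- `prodMat G n = B · (G 0) · (G 1) ⋯ (G n)`. -/
def prodMat (G : ℕ → Matrix (Fin 3) (Fin 3) ℝ) (n : ℕ) : Matrix (Fin 3) (Fin 3) ℝ :=
  Bm * ((List.range (n+1)).map G).prod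

/-- The triangle `Δ(i₀,…,iₙ)`: the convex hull of the images under
`π(x₀,x₁,x₂) = (x₁/x₀, x₂/x₀)` of the three columns of `M`. -/
def tri (M : Matrix (Fin 3) (Fin 3) ℝ) : Set (ℝ × ℝ) :=
  convexHull ℝ {p | ∃ j : Fin 3, p = (M 1 j / M 0 j, M 2 j / M 0 j)}

/-- `Δ(i₀,i₁,…) = ⋂ₙ Δ(i₀,…,iₙ)`, for the sequence of matrices `G m = F_{i_m}`. -/
def DeltaInf (G : ℕ → Matrix (Fin 3) (Fin 3) ℝ) : Set (ℝ × ℝ) :=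
  ⋂ n : ℕ, tri (prodMat G n)


/-! Column `j` of `Mₙ₊₁ = Mₙ · F` is a column of `Mₙ` or the sum of two of them, so each vertex
of `Δ(i₀,…,iₙ₊₁)` is a convex combination of vertices of `Δ(i₀,…,iₙ)`, with weights read off the
first rows, and the triangles are nested. Over a window of `L` steps, `M_{a+L} = M_a · N` with `N`
a nonnegative integer matrix. Bounded ratios make the first-row sum grow geometrically, so for `L`
large no column of `N` is a unit vector: every column has two nonzero entries, any two columns
share one, and the corresponding weights are at least some `δ > 0` independent of `a`. Dobrushin's
estimate then shrinks the diameter of the triangle by the factor `1 - δ` over every window. -/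

namespace Matrix

section Wide

variable {n : Type*}

def IsWide (v : n → ℝ) : Prop :=
  ∃ k₁ k₂, k₁ ≠ k₂ ∧ v k₁ ≠ 0 ∧ v k₂ ≠ 0

lemma IsWide.mono {v w : n → ℝ} (hv : IsWide v) (hvw : ∀ k, v k ≠ 0 → w k ≠ 0) : IsWide w :=
  let ⟨k₁, k₂, hk, h₁, h₂⟩ := hv
  ⟨k₁, k₂, hk, hvw k₁ h₁, hvw k₂ h₂⟩

lemma IsWide.exists_ne_zero_ne_zero {v w : Fin 3 → ℝ} (hv : IsWide v) (hw : IsWide w) :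
    ∃ k, v k ≠ 0 ∧ w k ≠ 0 := by
  obtain ⟨a₁, a₂, ha, hv₁, hv₂⟩ := hv
  obtain ⟨b₁, b₂, hb, hw₁, hw₂⟩ := hw
  have pigeonhole : ∀ a₁ a₂ b₁ b₂ : Fin 3, a₁ ≠ a₂ → b₁ ≠ b₂ →
      a₁ = b₁ ∨ a₁ = b₂ ∨ a₂ = b₁ ∨ a₂ = b₂ := by decide
  rcases pigeonhole a₁ a₂ b₁ b₂ ha hb with rfl | rfl | rfl | rfl
  exacts [⟨_, hv₁, hw₁⟩, ⟨_, hv₁, hw₂⟩, ⟨_, hv₂, hw₁⟩, ⟨_, hv₂, hw₂⟩]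

lemma mul_apply_pos [Fintype n] {m o : Type*} {N : Matrix m n ℝ} {F : Matrix n o ℝ} {k : m}
    {j : o} (hN : ∀ l, 0 ≤ N k l) (hF : ∀ l, 0 ≤ F l j) {l : n} (hkl : 0 < N k l)
    (hlj : 0 < F l j) : 0 < (N * F) k j :=
  (mul_pos hkl hlj).trans_le
    (Finset.single_le_sum (fun i _ => mul_nonneg (hN i) (hF i)) (Finset.mem_univ l))

variable [DecidableEq n]

def IsUnitOrWide (v : n → ℝ) : Prop :=
  (∃ c, v = Pi.single c 1) ∨ IsWide v

lemma IsUnitOrWide.exists_ne_zero {v : n → ℝ} (hv : IsUnitOrWide v) : ∃ k, v k ≠ 0 := by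
  rcases hv with ⟨c, rfl⟩ | ⟨k, -, -, hk, -⟩
  exacts [⟨c, by simp⟩, ⟨k, hk⟩]

lemma isWide_of_support_superset {u v w : n → ℝ} (hu : IsUnitOrWide u) (hv : IsUnitOrWide v)
    (huv : u ≠ v) (hw : ∀ k, (u k ≠ 0 → w k ≠ 0) ∧ (v k ≠ 0 → w k ≠ 0)) : IsWide w := by
  rcases hu with ⟨c, rfl⟩ | hu
  · rcases hv with ⟨d, rfl⟩ | hv
    · exact ⟨c, d, fun h => huv (h ▸ rfl), (hw c).1 (by simp), (hw d).2 (by simp)⟩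
    · exact hv.mono fun k => (hw k).2
  · exact hu.mono fun k => (hw k).1

lemma mul_apply_eq_of_transpose_eq_single [Fintype n] {m o : Type*} {M : Matrix m n ℝ}
    {N : Matrix n o ℝ} {j : o} {c : n} (h : Nᵀ j = Pi.single c 1) (i : m) :
    (M * N) i j = M i c := by
  have : ∀ l, N l j = (Pi.single c 1 : n → ℝ) l := fun l => congrFun h l
  simp [mul_apply, this, Pi.single_apply]

variable [Fintype n]

variable (n) in
/-- The determinant keeps two unit columns apart, so that the sum of two distinct columns is
always wide. -/
def wideSubmonoid : Submonoid (Matrix n n ℝ) where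
  carrier := {N | (∀ k j, ∃ m : ℕ, N k j = m) ∧ N.det ≠ 0 ∧ ∀ j, IsUnitOrWide (Nᵀ j)}
  one_mem' := by
    refine ⟨fun k j => ⟨(1 : Matrix n n ℕ) k j, ?_⟩, by simp, fun j => Or.inl ⟨j, ?_⟩⟩
    · rw [one_apply, one_apply]; split_ifs <;> simp
    · ext k; by_cases h : k = j <;> simp [h]
  mul_mem' := by
    rintro N F ⟨hN, hNdet, hNcol⟩ ⟨hF, hFdet, hFcol⟩
    choose a ha using hN
    choose b hb using hF
    have hN₀ : ∀ k l, 0 ≤ N k l := fun k l => ha k l ▸ Nat.cast_nonneg _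
    have hF₀ : ∀ l j, 0 ≤ F l j := fun l j => hb l j ▸ Nat.cast_nonneg _
    have hsupp : ∀ {k l j}, N k l ≠ 0 → F l j ≠ 0 → (N * F) k j ≠ 0 := fun hkl hlj =>
      (mul_apply_pos (hN₀ _) (hF₀ · _) ((hN₀ _ _).lt_of_ne' hkl) ((hF₀ _ _).lt_of_ne' hlj)).ne'
    refine ⟨fun k j => ⟨∑ l, a k l * b l j, by simp [mul_apply, ha, hb]⟩,
      by simp [det_mul, hNdet, hFdet], fun j => ?_⟩
    rcases hFcol j with ⟨c, hc⟩ | ⟨l₁, l₂, hl, h₁, h₂⟩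
    · have hcol : (N * F)ᵀ j = Nᵀ c := funext (mul_apply_eq_of_transpose_eq_single hc)
      exact hcol ▸ hNcol c
    · refine Or.inr (isWide_of_support_superset (hNcol l₁) (hNcol l₂) (fun h => hNdet ?_)
        fun k => ⟨(hsupp · h₁), (hsupp · h₂)⟩)
      exact det_zero_of_column_eq hl fun k => congrFun h k

variable {N : Matrix n n ℝ}

lemma nonneg_of_mem_wideSubmonoid (hN : N ∈ wideSubmonoid n) (k j : n) : 0 ≤ N k j := by
  obtain ⟨m, hm⟩ := hN.1 k j
  exact hm ▸ m.cast_nonneg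

lemma one_le_of_mem_wideSubmonoid (hN : N ∈ wideSubmonoid n) {k j : n} (h : N k j ≠ 0) :
    1 ≤ N k j := by
  obtain ⟨m, hm⟩ := hN.1 k j
  rw [hm] at h ⊢
  exact Nat.one_le_cast.2 (Nat.one_le_iff_ne_zero.2 (by exact_mod_cast h))

lemma mul_apply_pos_of_mem_wideSubmonoid {m : Type*} {M : Matrix m n ℝ} {i : m}
    (hM : ∀ k, 0 < M i k) (hN : N ∈ wideSubmonoid n) (j : n) : 0 < (M * N) i j := by
  obtain ⟨k, hk⟩ := IsUnitOrWide.exists_ne_zero (hN.2.2 j)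
  exact mul_apply_pos (fun l => (hM l).le) (nonneg_of_mem_wideSubmonoid hN · j) (hM k)
    ((nonneg_of_mem_wideSubmonoid hN k j).lt_of_ne' hk)

lemma permMatrix_mem_wideSubmonoid (σ : Equiv.Perm n) : σ.permMatrix ℝ ∈ wideSubmonoid n := by
  refine ⟨fun k j => ⟨if σ k = j then 1 else 0, ?_⟩, by simp, fun j => Or.inl ⟨σ.symm j, ?_⟩⟩
  · simp [PEquiv.toMatrix_apply]
  · ext k; simp [PEquiv.toMatrix_apply, Pi.single_apply, Equiv.eq_symm_apply]

end Wide

lemma sum_mul_apply_of_mulVec_one {m n : Type*} [Fintype n] [DecidableEq n] (M : Matrix m n ℝ)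
    {F : Matrix n n ℝ} {k : n} (hF : F *ᵥ 1 = 1 + Pi.single k 1) (i : m) :
    ∑ j, (M * F) i j = ∑ j, M i j + M i k := by
  have h := congrFun (mulVec_mulVec 1 M F) i
  rw [hF, mulVec_add, mulVec_single_one] at h
  simpa [mulVec, dotProduct] using h.symm

end Matrix

section Dobrushin

variable {ι E : Type*} [Fintype ι] [SeminormedAddCommGroup E] [NormedSpace ℝ E]

lemma norm_sum_smul_sub_sum_smul_le {u v : ι → ℝ} (hu : ∀ k, 0 ≤ u k) (hv : ∀ k, 0 ≤ v k)
    (huv : ∑ k, u k = ∑ k, v k) {w : ι → E} {D : ℝ} (hD : ∀ k l, ‖w k - w l‖ ≤ D) :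
    ‖∑ k, u k • w k - ∑ k, v k • w k‖ ≤ (∑ k, u k) * D := by
  set s := ∑ k, u k
  have hs : 0 ≤ s := Finset.sum_nonneg fun k _ => hu k
  have key : s • (∑ k, u k • w k - ∑ k, v k • w k) = ∑ k, ∑ l, (u k * v l) • (w k - w l) := by
    have h₁ : ∀ k, ∑ l, (u k * v l) • w k = s • u k • w k := fun k => by
      rw [← Finset.sum_smul, ← Finset.mul_sum, ← huv, mul_comm, mul_smul]
    have h₂ : ∀ k, ∑ l, (u k * v l) • w l = u k • ∑ l, v l • w l := fun k => by
      simp only [Finset.smul_sum, mul_smul]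
    simp only [smul_sub, Finset.sum_sub_distrib, h₁, h₂, ← Finset.smul_sum, ← Finset.sum_smul]
    rfl
  have hbound : s * ‖∑ k, u k • w k - ∑ k, v k • w k‖ ≤ s * (s * D) := by
    calc s * ‖∑ k, u k • w k - ∑ k, v k • w k‖
        = ‖∑ k, ∑ l, (u k * v l) • (w k - w l)‖ := by
          rw [← key, norm_smul, Real.norm_of_nonneg hs]
      _ ≤ ∑ k, ∑ l, u k * v l * D := by
          refine (norm_sum_le _ _).trans (Finset.sum_le_sum fun k _ =>
            (norm_sum_le _ _).trans (Finset.sum_le_sum fun l _ => ?_))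
          rw [norm_smul, Real.norm_of_nonneg (mul_nonneg (hu k) (hv l))]
          exact mul_le_mul_of_nonneg_left (hD k l) (mul_nonneg (hu k) (hv l))
      _ = s * (s * D) := by
          simp only [← Finset.sum_mul, ← Finset.mul_sum, ← huv]
          ring
  rcases hs.eq_or_lt with hs0 | hs0
  · have hu0 : ∀ k, u k = 0 := fun k =>
      (Finset.sum_eq_zero_iff_of_nonneg fun k _ => hu k).1 hs0.symm k (Finset.mem_univ k)
    have hv0 : ∀ k, v k = 0 := fun k =>
      (Finset.sum_eq_zero_iff_of_nonneg fun k _ => hv k).1 (huv ▸ hs0.symm) k (Finset.mem_univ k)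
    simp [hu0, hv0, ← hs0]
  · exact le_of_mul_le_mul_left hbound hs0

/-- Dobrushin's estimate: the common part `min p q` of the two weight vectors cancels. -/
lemma norm_sum_smul_sub_sum_smul_le_of_overlap {p q : ι → ℝ} (hp : ∀ k, 0 ≤ p k)
    (hq : ∀ k, 0 ≤ q k) (hp₁ : ∑ k, p k = 1) (hq₁ : ∑ k, q k = 1) {δ : ℝ} {k₀ : ι}
    (hpδ : δ ≤ p k₀) (hqδ : δ ≤ q k₀) {w : ι → E} {D : ℝ} (hD : ∀ k l, ‖w k - w l‖ ≤ D) :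
    ‖∑ k, p k • w k - ∑ k, q k • w k‖ ≤ (1 - δ) * D := by
  set m : ι → ℝ := fun k => min (p k) (q k)
  have hm : ∀ k, 0 ≤ m k := fun k => le_min (hp k) (hq k)
  have hδm : δ ≤ ∑ k, m k :=
    (le_min hpδ hqδ).trans (Finset.single_le_sum (fun k _ => hm k) (Finset.mem_univ k₀))
  have hpm : ∑ k, (p k - m k) = 1 - ∑ k, m k := by rw [Finset.sum_sub_distrib, hp₁]
  have hqm : ∑ k, (q k - m k) = 1 - ∑ k, m k := by rw [Finset.sum_sub_distrib, hq₁]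
  have h := norm_sum_smul_sub_sum_smul_le (fun k => sub_nonneg.2 (min_le_left (p k) (q k)))
    (fun k => sub_nonneg.2 (min_le_right (p k) (q k))) (hpm.trans hqm.symm) hD
  have hD₀ : 0 ≤ D := (norm_nonneg _).trans (hD k₀ k₀)
  simp only [sub_smul, Finset.sum_sub_distrib, sub_sub_sub_cancel_right] at h
  exact h.trans (mul_le_mul_of_nonneg_right (by linarith) hD₀)

end Dobrushin

lemma exists_iInter_eq_singleton_of_diam {X : Type*} [MetricSpace X] {K : ℕ → Set X}
    (hK : ∀ n, K (n + 1) ⊆ K n) (hne : ∀ n, (K n).Nonempty) (hc : ∀ n, IsCompact (K n))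
    (hdiam : ∀ ε > 0, ∃ n, Metric.diam (K n) ≤ ε) : ∃ q, ⋂ n, K n = {q} := by
  obtain ⟨q, hq⟩ := (hc 0).nonempty_iInter_of_sequence_nonempty_isCompact_isClosed K hK hne
    fun n => (hc n).isClosed
  refine ⟨q, Set.eq_singleton_iff_unique_mem.2 ⟨hq, fun p hp => eq_of_forall_dist_le ?_⟩⟩
  intro ε hε
  obtain ⟨n, hn⟩ := hdiam ε hε
  exact (Metric.dist_le_diam_of_mem (hc n).isBounded (Set.mem_iInter.1 hp n)
    (Set.mem_iInter.1 hq n)).trans hn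

lemma sum_le_card_mul_of_forall_le_mul {ι : Type*} [Fintype ι] {x : ι → ℝ} {C : ℝ}
    (hx : ∀ j j', x j ≤ C * x j') (k : ι) : ∑ j, x j ≤ Fintype.card ι * (C * x k) := by
  simpa using Finset.sum_le_card_nsmul Finset.univ x (C * x k) fun j _ => hx j k

section Vertex

variable {ι κ : Type*} [Fintype ι]

def vertex (M : Matrix (Fin 3) κ ℝ) (j : κ) : ℝ × ℝ := (M 1 j / M 0 j, M 2 j / M 0 j)

lemma tri_eq_convexHull (M : Matrix (Fin 3) (Fin 3) ℝ) :
    tri M = convexHull ℝ (Set.range (vertex M)) := by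
  simp only [tri, vertex, Set.range, eq_comm]

lemma vertex_mul {M : Matrix (Fin 3) ι ℝ} (hM : ∀ k, M 0 k ≠ 0) (N : Matrix ι κ ℝ) (j : κ) :
    vertex (M * N) j = ∑ k, (M 0 k * N k j / (M * N) 0 j) • vertex M k := by
  ext <;>
  · simp only [vertex, Prod.fst_sum, Prod.snd_sum, Prod.smul_fst, Prod.smul_snd, smul_eq_mul]
    rw [mul_apply, Finset.sum_div]
    refine Finset.sum_congr rfl fun k _ => ?_
    field_simp [hM k]

lemma sum_weight_eq_one {M : Matrix (Fin 3) ι ℝ} {N : Matrix ι κ ℝ} {j : κ}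
    (hMN : (M * N) 0 j ≠ 0) : ∑ k, M 0 k * N k j / (M * N) 0 j = 1 := by
  rw [← Finset.sum_div, ← mul_apply, div_self hMN]

lemma isCompact_tri (M : Matrix (Fin 3) (Fin 3) ℝ) : IsCompact (tri M) := by
  rw [tri_eq_convexHull]
  exact (Set.finite_range _).isCompact_convexHull (𝕜 := ℝ)

lemma tri_nonempty (M : Matrix (Fin 3) (Fin 3) ℝ) : (tri M).Nonempty := by
  rw [tri_eq_convexHull]
  exact (convexHull_nonempty_iff (𝕜 := ℝ)).2 (Set.range_nonempty _)

end Vertex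

section Triangle

variable {M N : Matrix (Fin 3) (Fin 3) ℝ}

lemma tri_mul_subset (hM : ∀ k, 0 < M 0 k) (hN : N ∈ wideSubmonoid (Fin 3)) :
    tri (M * N) ⊆ tri M := by
  rw [tri_eq_convexHull, tri_eq_convexHull]
  refine convexHull_min ?_ (convex_convexHull ℝ _)
  rintro _ ⟨j, rfl⟩
  have hMN := mul_apply_pos_of_mem_wideSubmonoid hM hN j
  rw [vertex_mul (fun k => (hM k).ne') N j]
  exact (convex_convexHull ℝ _).sum_mem
    (fun k _ => div_nonneg (mul_nonneg (hM k).le (nonneg_of_mem_wideSubmonoid hN k j)) hMN.le)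
    (sum_weight_eq_one hMN.ne') fun k _ => subset_convexHull ℝ _ ⟨k, rfl⟩

lemma diam_tri_mul_le (hM : ∀ k, 0 < M 0 k) (hN : N ∈ wideSubmonoid (Fin 3))
    (hwide : ∀ j, IsWide (Nᵀ j)) {δ : ℝ} (hδ : ∀ j k, δ * (M * N) 0 j ≤ M 0 k) :
    Metric.diam (tri (M * N)) ≤ (1 - δ) * Metric.diam (tri M) := by
  have hMN := mul_apply_pos_of_mem_wideSubmonoid hM hN
  have hweight : ∀ j k, 0 ≤ M 0 k * N k j / (M * N) 0 j := fun j k =>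
    div_nonneg (mul_nonneg (hM k).le (nonneg_of_mem_wideSubmonoid hN k j)) (hMN j).le
  have hδweight : ∀ j k, N k j ≠ 0 → δ ≤ M 0 k * N k j / (M * N) 0 j := fun j k hk => by
    rw [le_div_iff₀ (hMN j)]
    exact (hδ j k).trans (le_mul_of_one_le_right (hM k).le (one_le_of_mem_wideSubmonoid hN hk))
  have hbdd : Bornology.IsBounded (Set.range (vertex M)) := (Set.finite_range _).isBounded
  rw [tri_eq_convexHull, tri_eq_convexHull, convexHull_diam, convexHull_diam]
  refine Metric.diam_le_of_forall_dist_le_of_nonempty (Set.range_nonempty _) ?_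
  rintro _ ⟨j, rfl⟩ _ ⟨j', rfl⟩
  obtain ⟨k, hk, hk'⟩ := IsWide.exists_ne_zero_ne_zero (hwide j) (hwide j')
  rw [dist_eq_norm, vertex_mul (fun k => (hM k).ne') N j, vertex_mul (fun k => (hM k).ne') N j']
  refine norm_sum_smul_sub_sum_smul_le_of_overlap (hweight j) (hweight j')
    (sum_weight_eq_one (hMN j).ne') (sum_weight_eq_one (hMN j').ne') (hδweight j k hk)
    (hδweight j' k hk') fun k l => ?_
  rw [← dist_eq_norm]
  exact Metric.dist_le_diam_of_mem hbdd ⟨k, rfl⟩ ⟨l, rfl⟩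

end Triangle

/-- Models `Mₙ = B·F₀⋯Fₙ`. Row sums `1, 1, 2` (in some order, as for `A₀` and `A₁`) mean that
each step adds one entry of the first row to the first-row sum. -/
structure IsTripSequence (M : ℕ → Matrix (Fin 3) (Fin 3) ℝ) : Prop where
  pos_zero : ∀ j, 0 < M 0 0 j
  step : ∀ n, ∃ F ∈ wideSubmonoid (Fin 3), (∃ k, F *ᵥ 1 = 1 + Pi.single k 1) ∧
    M (n + 1) = M n * F

def HasBoundedRatios (M : ℕ → Matrix (Fin 3) (Fin 3) ℝ) (C : ℝ) : Prop :=
  ∀ n j j', M n 0 j ≤ C * M n 0 j'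

lemma HasBoundedRatios.sum_le_three_mul {M : ℕ → Matrix (Fin 3) (Fin 3) ℝ} {C : ℝ}
    (hb : HasBoundedRatios M C) (n : ℕ) (k : Fin 3) : ∑ j, M n 0 j ≤ 3 * C * M n 0 k := by
  simpa [mul_assoc] using sum_le_card_mul_of_forall_le_mul (hb n) k

namespace IsTripSequence

variable {M : ℕ → Matrix (Fin 3) (Fin 3) ℝ}

lemma pos (hM : IsTripSequence M) (n : ℕ) (j : Fin 3) : 0 < M n 0 j := by
  induction n generalizing j with
  | zero => exact hM.pos_zero j
  | succ n ih =>
    obtain ⟨F, hF, -, hMF⟩ := hM.step n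
    exact hMF ▸ mul_apply_pos_of_mem_wideSubmonoid ih hF j

lemma tri_succ_subset (hM : IsTripSequence M) (n : ℕ) : tri (M (n + 1)) ⊆ tri (M n) := by
  obtain ⟨F, hF, -, hMF⟩ := hM.step n
  exact hMF ▸ tri_mul_subset (hM.pos n) hF

lemma exists_window (hM : IsTripSequence M) (a m : ℕ) :
    ∃ N ∈ wideSubmonoid (Fin 3), M (a + m) = M a * N := by
  induction m with
  | zero => exact ⟨1, one_mem _, by simp⟩
  | succ m ih =>
    obtain ⟨N, hN, hMN⟩ := ih
    obtain ⟨F, hF, -, hMF⟩ := hM.step (a + m)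
    exact ⟨N * F, mul_mem hN hF, by rw [← add_assoc, hMF, hMN, Matrix.mul_assoc]⟩

variable {C : ℝ}

lemma one_le_of_hasBoundedRatios (hM : IsTripSequence M) (hb : HasBoundedRatios M C) :
    1 ≤ C :=
  le_of_mul_le_mul_right (by simpa using hb 0 0 0) (hM.pos 0 0)

lemma sum_succ_bounds (hM : IsTripSequence M) (hb : HasBoundedRatios M C) (n : ℕ) :
    (1 + (3 * C)⁻¹) * ∑ j, M n 0 j ≤ ∑ j, M (n + 1) 0 j ∧
      ∑ j, M (n + 1) 0 j ≤ 2 * ∑ j, M n 0 j := by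
  obtain ⟨F, -, ⟨k, hk⟩, hMF⟩ := hM.step n
  rw [hMF, sum_mul_apply_of_mulVec_one _ hk]
  have hC : 0 < 3 * C := by linarith [hM.one_le_of_hasBoundedRatios hb]
  have hk_le : M n 0 k ≤ ∑ j, M n 0 j :=
    Finset.single_le_sum (fun j _ => (hM.pos n j).le) (Finset.mem_univ k)
  constructor
  · rw [add_mul, one_mul, add_le_add_iff_left, inv_mul_le_iff₀ hC]
    exact hb.sum_le_three_mul n k
  · linarith

lemma pow_mul_sum_le (hM : IsTripSequence M) (hb : HasBoundedRatios M C) (a m : ℕ) :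
    (1 + (3 * C)⁻¹) ^ m * ∑ j, M a 0 j ≤ ∑ j, M (a + m) 0 j :=
  geom_le (u := fun m => ∑ j, M (a + m) 0 j)
    (by have := hM.one_le_of_hasBoundedRatios hb; positivity) m
    fun k _ => (hM.sum_succ_bounds hb (a + k)).1

lemma sum_le_pow_mul (hM : IsTripSequence M) (hb : HasBoundedRatios M C) (a m : ℕ) :
    ∑ j, M (a + m) 0 j ≤ 2 ^ m * ∑ j, M a 0 j :=
  le_geom (u := fun m => ∑ j, M (a + m) 0 j) zero_le_two m
    fun k _ => (hM.sum_succ_bounds hb (a + k)).2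

/-- A unit column of `N` would leave an entry of the first row unchanged over the window, while
the first-row sum has grown by more than the factor `3C` bounding the ratio of sum to entry. -/
lemma isWide_of_window (hM : IsTripSequence M) (hb : HasBoundedRatios M C) {L : ℕ}
    (hL : 3 * C < (1 + (3 * C)⁻¹) ^ L) {a : ℕ} {N : Matrix (Fin 3) (Fin 3) ℝ}
    (hN : N ∈ wideSubmonoid (Fin 3)) (hMN : M (a + L) = M a * N) (j : Fin 3) :
    IsWide (Nᵀ j) := by
  refine (hN.2.2 j).resolve_left fun ⟨c, hc⟩ => ?_
  have hjc : M (a + L) 0 j = M a 0 c := by rw [hMN, mul_apply_eq_of_transpose_eq_single hc]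
  have hsum : 0 < ∑ j, M a 0 j := Finset.sum_pos (fun j _ => hM.pos a j) Finset.univ_nonempty
  have hc_le : M a 0 c ≤ ∑ j, M a 0 j :=
    Finset.single_le_sum (fun j _ => (hM.pos a j).le) (Finset.mem_univ c)
  have hC : 0 < 3 * C := by linarith [hM.one_le_of_hasBoundedRatios hb]
  refine lt_irrefl (3 * C * ∑ j, M a 0 j) ?_
  calc 3 * C * ∑ j, M a 0 j < (1 + (3 * C)⁻¹) ^ L * ∑ j, M a 0 j := by gcongr
    _ ≤ ∑ j, M (a + L) 0 j := hM.pow_mul_sum_le hb a L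
    _ ≤ 3 * C * M a 0 c := hjc ▸ hb.sum_le_three_mul (a + L) j
    _ ≤ 3 * C * ∑ j, M a 0 j := by gcongr

lemma exists_diam_tri_contraction (hM : IsTripSequence M) (hb : HasBoundedRatios M C) :
    ∃ L : ℕ, ∃ δ : ℝ, 0 < δ ∧ δ ≤ 1 ∧
      ∀ a, Metric.diam (tri (M (a + L))) ≤ (1 - δ) * Metric.diam (tri (M a)) := by
  have hC := hM.one_le_of_hasBoundedRatios hb
  obtain ⟨L, hL⟩ := pow_unbounded_of_one_lt (3 * C)
    (lt_add_of_pos_right 1 (by positivity) : 1 < 1 + (3 * C)⁻¹)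
  refine ⟨L, (3 * C * 2 ^ L)⁻¹, by positivity,
    inv_le_one_of_one_le₀ (by nlinarith [one_le_pow₀ (M₀ := ℝ) one_le_two (n := L)]),
    fun a => ?_⟩
  obtain ⟨N, hN, hMN⟩ := hM.exists_window a L
  rw [hMN]
  refine diam_tri_mul_le (hM.pos a) hN (hM.isWide_of_window hb hL hN hMN) fun j k => ?_
  rw [← hMN]
  -- first-row sums at most double at each step, so `(3C·2^L)⁻¹` bounds the weights from below
  calc (3 * C * 2 ^ L)⁻¹ * M (a + L) 0 j
      ≤ (3 * C * 2 ^ L)⁻¹ * (2 ^ L * ∑ j, M a 0 j) := by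
        gcongr
        exact (Finset.single_le_sum (fun j _ => (hM.pos (a + L) j).le)
          (Finset.mem_univ j)).trans (hM.sum_le_pow_mul hb a L)
    _ = (3 * C)⁻¹ * ∑ j, M a 0 j := by field_simp
    _ ≤ M a 0 k := by rw [inv_mul_le_iff₀ (by positivity)]; exact hb.sum_le_three_mul a k

theorem exists_iInter_tri_eq_singleton (hM : IsTripSequence M) (hb : HasBoundedRatios M C) :
    ∃ q, ⋂ n, tri (M n) = {q} := by
  obtain ⟨L, δ, hδ, hδ₁, hcontr⟩ := hM.exists_diam_tri_contraction hb
  have hiter : ∀ m, Metric.diam (tri (M (L * m))) ≤ (1 - δ) ^ m * Metric.diam (tri (M 0)) :=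
    fun m => le_geom (u := fun m => Metric.diam (tri (M (L * m)))) (by linarith) m
      fun k _ => by rw [mul_add_one]; exact hcontr (L * k)
  have hlim : Filter.Tendsto (fun m => (1 - δ) ^ m * Metric.diam (tri (M 0))) Filter.atTop
      (nhds 0) := by
    simpa using (tendsto_pow_atTop_nhds_zero_of_lt_one (by linarith) (by linarith)).mul_const
      (Metric.diam (tri (M 0)))
  refine exists_iInter_eq_singleton_of_diam hM.tri_succ_subset (fun n => tri_nonempty _)
    (fun n => isCompact_tri _) fun ε hε => ?_
  obtain ⟨m, hm⟩ := (hlim.eventually (Iic_mem_nhds hε)).exists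
  exact ⟨L * m, (hiter m).trans hm⟩

end IsTripSequence

lemma A0_mem_wideSubmonoid : A0 ∈ wideSubmonoid (Fin 3) := by
  refine ⟨fun k j => ⟨!![0,0,1; 1,0,0; 0,1,1] k j, ?_⟩, by simp [A0, det_fin_three], fun j => ?_⟩
  · fin_cases k <;> fin_cases j <;> simp [A0]
  · fin_cases j
    · exact Or.inl ⟨1, by ext k; fin_cases k <;> simp [A0]⟩
    · exact Or.inl ⟨2, by ext k; fin_cases k <;> simp [A0]⟩
    · exact Or.inr ⟨0, 2, by decide, by simp [A0], by simp [A0]⟩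

lemma A1_mem_wideSubmonoid : A1 ∈ wideSubmonoid (Fin 3) := by
  refine ⟨fun k j => ⟨!![1,0,1; 0,1,0; 0,0,1] k j, ?_⟩, by simp [A1, det_fin_three], fun j => ?_⟩
  · fin_cases k <;> fin_cases j <;> simp [A1]
  · fin_cases j
    · exact Or.inl ⟨0, by ext k; fin_cases k <;> simp [A1]⟩
    · exact Or.inl ⟨1, by ext k; fin_cases k <;> simp [A1]⟩
    · exact Or.inr ⟨0, 2, by decide, by simp [A1], by simp [A1]⟩

lemma A0_mulVec_one : A0 *ᵥ 1 = 1 + Pi.single 2 1 := by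
  ext k; fin_cases k <;> simp [A0, mulVec, dotProduct, Fin.sum_univ_three]

lemma A1_mulVec_one : A1 *ᵥ 1 = 1 + Pi.single 0 1 := by
  ext k; fin_cases k <;> simp [A1, mulVec, dotProduct, Fin.sum_univ_three]

lemma P_mul_mul_P_mulVec_one {A : Matrix (Fin 3) (Fin 3) ℝ} {k : Fin 3}
    (hA : A *ᵥ 1 = 1 + Pi.single k 1) (σ τ : Equiv.Perm (Fin 3)) :
    (P σ * A * P τ) *ᵥ 1 = 1 + Pi.single (σ.symm k) 1 := by
  rw [← mulVec_mulVec, ← mulVec_mulVec, P, P, permMatrix_mulVec, permMatrix_mulVec, Pi.one_comp, hA]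
  ext j
  simp [Pi.single_apply, Equiv.eq_symm_apply]

lemma Fmat_mem_wideSubmonoid (σ τ0 τ1 : Equiv.Perm (Fin 3)) (i : Fin 2) :
    Fmat σ τ0 τ1 i ∈ wideSubmonoid (Fin 3) := by
  fin_cases i
  · exact mul_mem (mul_mem (permMatrix_mem_wideSubmonoid σ) A0_mem_wideSubmonoid)
      (permMatrix_mem_wideSubmonoid τ0)
  · exact mul_mem (mul_mem (permMatrix_mem_wideSubmonoid σ) A1_mem_wideSubmonoid)
      (permMatrix_mem_wideSubmonoid τ1)

lemma exists_Fmat_mulVec_one (σ τ0 τ1 : Equiv.Perm (Fin 3)) (i : Fin 2) :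
    ∃ k, Fmat σ τ0 τ1 i *ᵥ 1 = 1 + Pi.single k 1 := by
  fin_cases i
  · exact ⟨_, P_mul_mul_P_mulVec_one A0_mulVec_one σ τ0⟩
  · exact ⟨_, P_mul_mul_P_mulVec_one A1_mulVec_one σ τ1⟩

lemma prodMat_zero (G : ℕ → Matrix (Fin 3) (Fin 3) ℝ) : prodMat G 0 = Bm * G 0 := by
  simp [prodMat]

lemma prodMat_succ (G : ℕ → Matrix (Fin 3) (Fin 3) ℝ) (n : ℕ) :
    prodMat G (n + 1) = prodMat G n * G (n + 1) := by
  simp [prodMat, List.range_succ, Matrix.mul_assoc]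

lemma isTripSequence_prodMat {G : ℕ → Matrix (Fin 3) (Fin 3) ℝ}
    (hG : ∀ m, G m ∈ wideSubmonoid (Fin 3) ∧ ∃ k, G m *ᵥ 1 = 1 + Pi.single k 1) :
    IsTripSequence (prodMat G) where
  pos_zero j := by
    rw [prodMat_zero]
    refine mul_apply_pos_of_mem_wideSubmonoid (fun k => ?_) (hG 0).1 j
    fin_cases k <;> simp [Bm]
  step n := ⟨G (n + 1), (hG (n + 1)).1, (hG (n + 1)).2, prodMat_succ G n⟩

theorem bounded_ratios_singleton_general
    (σ τ0 τ1 : ℕ → Equiv.Perm (Fin 3)) (i : ℕ → Fin 2) (C : ℝ)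
    (hbound : ∀ n : ℕ, ∀ j j' : Fin 3,
      prodMat (fun m => Fmat (σ m) (τ0 m) (τ1 m) (i m)) n 0 j ≤
        C * prodMat (fun m => Fmat (σ m) (τ0 m) (τ1 m) (i m)) n 0 j') :
    ∃ q : ℝ × ℝ, DeltaInf (fun m => Fmat (σ m) (τ0 m) (τ1 m) (i m)) = {q} :=
  (isTripSequence_prodMat fun _ => ⟨Fmat_mem_wideSubmonoid _ _ _ _,
    exists_Fmat_mulVec_one _ _ _ _⟩).exists_iInter_tri_eq_singleton hbound

/-- Theorem 7.2: if the ratios of the first-row entries of the matrices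
`Mₙ = B·F_{0,i₀}⋯F_{n,iₙ}` are uniformly bounded by a constant `C`, then the
intersection `Δ(i₀,i₁,…)` is a single point. -/
theorem bounded_ratios_singleton
    (σ τ0 τ1 : ℕ → Equiv.Perm (Fin 3)) (i : ℕ → Fin 2) (C : ℝ) (hC : 0 < C)
    (hbound : ∀ n : ℕ, ∀ j j' : Fin 3,
      prodMat (fun m => Fmat (σ m) (τ0 m) (τ1 m) (i m)) n 0 j ≤
        C * prodMat (fun m => Fmat (σ m) (τ0 m) (τ1 m) (i m)) n 0 j') :
    ∃ q : ℝ × ℝ, DeltaInf (fun m => Fmat (σ m) (τ0 m) (τ1 m) (i m)) = {q} :=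
  bounded_ratios_singleton_general σ τ0 τ1 i C hbound
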